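/- Every free group Γ is Tannakian over any DVR R: for every representation V of Γ on a finitely generated R-module, there exists a representation Ṽ of Γ on a finitely generated torsion-free (equivalently free) R-module together with a Γ-equivariant surjection Ṽ → V. -/

import Mathlib

/-!
A representation of `FreeGroup α` on `E` is the choice of an automorphism `ρ a` of `E` for each
generator. Choose a surjection `π : P → E` from a finite free module and lifts `G`, `H` of `ρ a`
and `(ρ a)⁻¹` along `π`; they need not be invertible, but the block matrix
`[[G, GH - 1], [1, H]]` on `P × P` is, with inverse `[[H, 1 - HG], [-1, G]]`, and it lifts `ρ a`
along `π ∘ fst`. Sending each generator to this block matrix defines a representation on the free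
module `P × P`, and `π ∘ fst` is an equivariant surjection since it intertwines the generators.
-/

/-- A weak lift of a representation `ρ` of the abstract group `Γ` on the `R`-module `V`:
a representation on a finitely generated torsion-free (equivalently free) `R`-module
together with an equivariant surjection onto `V`. -/
structure WeakLift (R Γ : Type) [CommRing R] [Group Γ] (V : Type) [AddCommGroup V]
    [Module R V] (ρ : Representation R Γ V) where
  W : Type
  [instAddCommGroup : AddCommGroup W]
  [instModule : Module R W]
  finite : Module.Finite R W
  torsionFree : NoZeroSMulDivisors R W
  σ : Representation R Γ W
  f : W →ₗ[R] V
  surjective : Function.Surjective f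
  equivariant : ∀ γ : Γ, f ∘ₗ σ γ = ρ γ ∘ₗ f

open LinearMap

namespace Representation

variable {R Γ V W : Type*} [Semiring R] [Group Γ] [AddCommMonoid V] [Module R V]
  [AddCommMonoid W] [Module R W]

def intertwiningSubgroup (σ : Representation R Γ W) (ρ : Representation R Γ V)
    (f : W →ₗ[R] V) : Subgroup Γ where
  carrier := {γ | f ∘ₗ σ γ = ρ γ ∘ₗ f}
  one_mem' := by simp [Module.End.one_eq_id]
  mul_mem' {γ δ} hγ hδ := by
    simp only [Set.mem_ofPred_eq, map_mul, Module.End.mul_eq_comp] at *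
    rw [← comp_assoc, hγ, comp_assoc, hδ, comp_assoc]
  inv_mem' {γ} hγ := by
    ext w
    calc f (σ γ⁻¹ w) = ρ γ⁻¹ (ρ γ (f (σ γ⁻¹ w))) := (ρ.inv_self_apply γ _).symm
      _ = ρ γ⁻¹ (f w) := by
        rw [← LinearMap.comp_apply (ρ γ), ← hγ, comp_apply, self_inv_apply]

theorem intertwiningSubgroup_eq_top_of_forall_of {α : Type*}
    {σ : Representation R (FreeGroup α) W} {ρ : Representation R (FreeGroup α) V}
    {f : W →ₗ[R] V} (h : ∀ a, f ∘ₗ σ (FreeGroup.of a) = ρ (FreeGroup.of a) ∘ₗ f) :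
    intertwiningSubgroup σ ρ f = ⊤ := by
  rw [eq_top_iff, ← FreeGroup.closure_range_of, Subgroup.closure_le]
  rintro _ ⟨a, rfl⟩
  exact h a

end Representation

section BlockLift

variable {R P E : Type*} [Semiring R] [AddCommGroup P] [Module R P] [AddCommGroup E] [Module R E]

def blockLift (G H : Module.End R P) : Module.End R (P × P) :=
  (G ∘ₗ fst R P P + (G * H - 1) ∘ₗ snd R P P).prod (fst R P P + H ∘ₗ snd R P P)

def blockLiftInv (G H : Module.End R P) : Module.End R (P × P) :=
  (H ∘ₗ fst R P P + (1 - H * G) ∘ₗ snd R P P).prod (-fst R P P + G ∘ₗ snd R P P)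

variable (G H : Module.End R P)

@[simp]
theorem blockLift_apply (x y : P) : blockLift G H (x, y) = (G x + G (H y) - y, x + H y) := by
  simp [blockLift, add_sub_assoc]

@[simp]
theorem blockLiftInv_apply (x y : P) :
    blockLiftInv G H (x, y) = (H x + y - H (G y), -x + G y) := by
  simp [blockLiftInv, add_sub_assoc]

theorem blockLift_mul_blockLiftInv : blockLift G H * blockLiftInv G H = 1 := by
  refine LinearMap.ext fun ⟨x, y⟩ ↦ Prod.ext ?_ ?_ <;> simp

theorem blockLiftInv_mul_blockLift : blockLiftInv G H * blockLift G H = 1 := by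
  refine LinearMap.ext fun ⟨x, y⟩ ↦ Prod.ext ?_ ?_ <;> simp

def blockLiftUnit : (Module.End R (P × P))ˣ :=
  ⟨blockLift G H, blockLiftInv G H, blockLift_mul_blockLiftInv G H,
    blockLiftInv_mul_blockLift G H⟩

theorem comp_fst_comp_blockLift {π : P →ₗ[R] E} {g h : Module.End R E} (hgh : g * h = 1)
    (hG : π ∘ₗ G = g ∘ₗ π) (hH : π ∘ₗ H = h ∘ₗ π) :
    (π ∘ₗ fst R P P) ∘ₗ blockLift G H = g ∘ₗ π ∘ₗ fst R P P := by
  refine LinearMap.ext fun ⟨x, y⟩ ↦ ?_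
  have hGx := congr($hG x)
  have hGHy := congr($hG (H y))
  have hHy := congr($hH y)
  have hghy := congr($hgh (π y))
  simp only [comp_apply, Module.End.mul_apply, Module.End.one_apply] at hGx hGHy hHy hghy
  simp [hGx, hGHy, hHy, hghy]

end BlockLift

theorem exists_representation_freeGroup_intertwining_fst {R P E α : Type*} [Semiring R]
    [AddCommGroup P] [Module R P] [Module.Projective R P] [AddCommGroup E] [Module R E]
    {π : P →ₗ[R] E} (hπ : Function.Surjective π) (ρ : Representation R (FreeGroup α) E) :
    ∃ σ : Representation R (FreeGroup α) (P × P),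
      ∀ γ, (π ∘ₗ fst R P P) ∘ₗ σ γ = ρ γ ∘ₗ π ∘ₗ fst R P P := by
  choose G hG using fun a ↦ Module.projective_lifting_property π (ρ (.of a) ∘ₗ π) hπ
  choose H hH using fun a ↦ Module.projective_lifting_property π (ρ (.of a)⁻¹ ∘ₗ π) hπ
  let σ : Representation R (FreeGroup α) (P × P) :=
    (Units.coeHom _).comp (FreeGroup.lift fun a ↦ blockLiftUnit (G a) (H a))
  have hσ : Representation.intertwiningSubgroup σ ρ (π ∘ₗ fst R P P) = ⊤ :=
    Representation.intertwiningSubgroup_eq_top_of_forall_of fun a ↦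
      comp_fst_comp_blockLift (G a) (H a) (by rw [← map_mul, mul_inv_cancel, map_one])
        (hG a) (hH a)
  exact ⟨σ, fun γ ↦ hσ.ge (Subgroup.mem_top γ)⟩

theorem stmt5 {R : Type} [CommRing R] [IsDomain R]
    (α : Type) :
    ∀ (E : Type) [AddCommGroup E] [Module R E], Module.Finite R E →
      ∀ ρ : Representation R (FreeGroup α) E,
        Nonempty (WeakLift R (FreeGroup α) E ρ) := by
  intro E _ _ _ ρ
  obtain ⟨n, π, hπ⟩ := Module.Finite.exists_fin' R E
  obtain ⟨σ, hσ⟩ := exists_representation_freeGroup_intertwining_fst hπ ρ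
  exact ⟨{
    W := (Fin n → R) × (Fin n → R)
    finite := inferInstance
    torsionFree := ⟨smul_eq_zero.mp⟩
    σ := σ
    f := π ∘ₗ fst R _ _
    surjective := hπ.comp Prod.fst_surjective
    equivariant := hσ }⟩
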